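/- arXiv:2206.14232 — 3 statements merged into one kernel-verified Lean document; each statement's English description precedes it below -/
import Mathlib

section
/- Let f ∈ ℤ[x₀,…,x_N] be a nonzero homogeneous polynomial of degree d ≥ 1 (N ≥ 1). For each k ≥ d let ‖·‖_k be an arbitrary norm on V_k ⊗ ℝ such that ‖x^a‖_k ≤ 1 for every multi-index a with |a| = k, and let π : V_k ⊗ ℝ → (V_k ⊗ ℝ)/(f·V_{k−d} ⊗ ℝ) be the quotient map. Let H¹_k be the set of ℤ-linear maps λ : Q_k → ℤ whose ℝ-linear extension satisfies |λ(π(v))| ≤ ‖v‖_k for all v ∈ V_k ⊗ ℝ (i.e. λ has dual norm at most 1 for the quotient norm on Q_k ⊗ ℝ). Then lim_{k→∞} (N!/k^N) · log #H¹_k = 0. -/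
open MeasureTheory MvPolynomial Filter

noncomputable section

/-- `V_k`: the lattice of integer homogeneous polynomials of degree `k`. -/
def Vlat (n k : ℕ) : Submodule ℤ (MvPolynomial (Fin n) ℤ) := homogeneousSubmodule (Fin n) ℤ k

/-- `f·V_{k−d}` viewed as a submodule of `V_k`, so that `Q_k = V_k ⧸ Wlat`. -/
def Wlat (n : ℕ) (f : MvPolynomial (Fin n) ℤ) (d k : ℕ) : Submodule ℤ (Vlat n k) :=
  (Submodule.map (LinearMap.mulLeft ℤ f) (homogeneousSubmodule (Fin n) ℤ (k - d))).comap
    (Vlat n k).subtype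

/-- The real homogeneous polynomials of degree `k`, i.e. `V_k ⊗ ℝ`. -/
abbrev VR (n k : ℕ) : Submodule ℝ (MvPolynomial (Fin n) ℝ) := homogeneousSubmodule (Fin n) ℝ k

lemma aux_degree_eq_sum {q : ℕ} (a : Fin q →₀ ℕ) : a.degree = ∑ j, a j := by
  rw [Finsupp.degree_apply, Finset.sum_subset (Finset.subset_univ a.support)]
  intro x _ hx
  simpa using Finsupp.notMem_support_iff.mp hx

lemma aux_log_nat_nonneg (m : ℕ) : 0 ≤ Real.log m := by
  rcases Nat.eq_zero_or_pos m with h | h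
  · simp [h]
  · exact Real.log_nonneg (by exact_mod_cast h)

lemma aux_digit_inj (M : ℕ) : ∀ (q : ℕ) (a b : Fin q → ℕ), (∀ j, a j < M) → (∀ j, b j < M) →
    (∑ j, a j * M ^ (j : ℕ)) = (∑ j, b j * M ^ (j : ℕ)) → a = b := by
  intro q
  induction q with
  | zero => intro a b _ _ _; funext j; exact j.elim0
  | succ q IH =>
    intro a b ha hb hs
    have key : ∀ c : Fin (q + 1) → ℕ,
        (∑ j, c j * M ^ (j : ℕ)) = c 0 + M * ∑ j : Fin q, c j.succ * M ^ (j : ℕ) := by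
      intro c
      rw [Fin.sum_univ_succ, Finset.mul_sum]
      simp only [Fin.val_zero, pow_zero, mul_one, Fin.val_succ, pow_succ]
      congr 1
      refine Finset.sum_congr rfl fun j _ => by ring
    rw [key a, key b] at hs
    have hM : 0 < M := lt_of_le_of_lt (Nat.zero_le _) (ha 0)
    have h00 : a 0 = b 0 := by
      have h := congrArg (· % M) hs
      simpa [Nat.add_mul_mod_self_left, Nat.mod_eq_of_lt (ha 0), Nat.mod_eq_of_lt (hb 0)] using h
    have hSS : (∑ j : Fin q, a j.succ * M ^ (j : ℕ)) = ∑ j : Fin q, b j.succ * M ^ (j : ℕ) :=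
      Nat.eq_of_mul_eq_mul_left hM (by omega)
    have htail := IH (fun j => a j.succ) (fun j => b j.succ) (fun j => ha _) (fun j => hb _) hSS
    funext j
    induction j using Fin.cases with
    | zero => exact h00
    | succ i => exact congrFun htail i

lemma aux_apply_eq_sum {q k : ℕ} (l : Vlat q k →ₗ[ℤ] ℤ) {ι : Type}
    (F : Finset ι) (mf : ι → (Fin q →₀ ℕ)) (g : ι → ℤ)
    (hdeg : ∀ a ∈ F, (mf a).degree = k) (s : Vlat q k)
    (hs : (s : MvPolynomial (Fin q) ℤ) = ∑ a ∈ F, monomial (mf a) (g a)) :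
    l s = ∑ a ∈ F.attach, g a.1 * l ⟨monomial (mf a.1) 1,
      (mem_homogeneousSubmodule _ _).2 (isHomogeneous_monomial _ (hdeg a.1 a.2))⟩ := by
  have hrep : s = ∑ a ∈ F.attach, g a.1 • (⟨monomial (mf a.1) 1,
      (mem_homogeneousSubmodule _ _).2 (isHomogeneous_monomial _ (hdeg a.1 a.2))⟩ : Vlat q k) := by
    apply Subtype.ext
    rw [hs, Submodule.coe_sum]
    rw [show (∑ a ∈ F.attach, ↑(g a.1 • (⟨monomial (mf a.1) 1,
        (mem_homogeneousSubmodule _ _).2 (isHomogeneous_monomial _ (hdeg a.1 a.2))⟩ : Vlat q k)))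
        = ∑ a ∈ F.attach, monomial (mf a.1) (g a.1) from
      Finset.sum_congr rfl fun a _ => by
        simp [smul_monomial]]
    exact (Finset.sum_attach F fun a => monomial (mf a) (g a)).symm
  rw [hrep, map_sum]
  exact Finset.sum_congr rfl fun a _ => by rw [_root_.map_smul, smul_eq_mul]

def H1T (n k d : ℕ) (f : MvPolynomial (Fin n) ℤ) (nrm : VR n k → ℝ) : Type :=
  {l : Vlat n k →ₗ[ℤ] ℤ //
    (∀ s ∈ Wlat n f d k, l s = 0) ∧
    ∃ Λ : VR n k →ₗ[ℝ] ℝ,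
      (∀ s : Vlat n k,
        Λ ⟨(s : MvPolynomial (Fin n) ℤ).map (Int.castRingHom ℝ),
            (mem_homogeneousSubmodule _ _).2
              (((mem_homogeneousSubmodule _ _).1 s.2).map _)⟩
          = (l s : ℝ)) ∧
      ∀ v : VR n k, |Λ v| ≤ nrm v}

lemma aux_card (n d k : ℕ) (hd : 1 ≤ d) (hk : d ≤ k)
    (f : MvPolynomial (Fin (n+2)) ℤ) (hf0 : f ≠ 0) (hf : f.IsHomogeneous d)
    (nrm : VR (n+2) k → ℝ)
    (hnn : ∀ v, 0 ≤ nrm v)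
    (hmon : ∀ (a : Fin (n+2) →₀ ℕ), (∑ j, a j) = k →
      ∀ (h : (monomial a 1 : MvPolynomial (Fin (n+2)) ℝ) ∈ VR (n+2) k),
        nrm ⟨monomial a 1, h⟩ ≤ 1) :
    0 < Nat.card (H1T (n+2) k d f nrm) ∧
      Nat.card (H1T (n+2) k d f nrm) ≤ 3 ^ ((n+2) * d * (k+1)^n) := by
  classical
  have memV : ∀ (a : Fin (n+2) →₀ ℕ), a.degree = k →
      (monomial a 1 : MvPolynomial (Fin (n+2)) ℤ) ∈ Vlat (n+2) k :=
    fun a ha => (mem_homogeneousSubmodule _ _).2 (isHomogeneous_monomial _ ha)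
  have hsupdeg : ∀ a ∈ f.support, (a : Fin (n+2) →₀ ℕ).degree = d := by
    intro a ha
    rw [Finsupp.degree_eq_weight_one]
    exact hf (mem_support_iff.1 ha)
  -- bound on values at monomials
  have hbound : ∀ (l : H1T (n+2) k d f nrm) (a : Fin (n+2) →₀ ℕ) (ha : a.degree = k),
      |l.1 ⟨monomial a 1, memV a ha⟩| ≤ 1 := by
    intro l a ha
    obtain ⟨Λ, hΛ, hΛb⟩ := l.2.2
    set s : Vlat (n+2) k := ⟨monomial a 1, memV a ha⟩ with hsdef
    have hmap : ((s : MvPolynomial (Fin (n+2)) ℤ).map (Int.castRingHom ℝ))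
        = (monomial a 1 : MvPolynomial (Fin (n+2)) ℝ) := by
      simp [hsdef, map_monomial]
    have hmem2 : (monomial a 1 : MvPolynomial (Fin (n+2)) ℝ) ∈ VR (n+2) k :=
      hmap ▸ ((mem_homogeneousSubmodule _ _).2
        (((mem_homogeneousSubmodule _ _).1 s.2).map (Int.castRingHom ℝ)))
    have hΛs := hΛ s
    have hv : (⟨(s : MvPolynomial (Fin (n+2)) ℤ).map (Int.castRingHom ℝ),
        (mem_homogeneousSubmodule _ _).2
          (((mem_homogeneousSubmodule _ _).1 s.2).map _)⟩ : VR (n+2) k)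
        = ⟨monomial a 1, hmem2⟩ := Subtype.ext hmap
    rw [hv] at hΛs
    have hnorm : |Λ ⟨monomial a 1, hmem2⟩| ≤ 1 :=
      le_trans (hΛb _) (hmon a ((aux_degree_eq_sum a).symm.trans ha) hmem2)
    rw [hΛs] at hnorm
    exact_mod_cast hnorm
  -- the weight ν and the leading exponent b
  set M := k + 1 with hM
  set ν : (Fin (n+2) →₀ ℕ) → ℕ := fun e => ∑ j, e j * M ^ (j : ℕ) with hν
  have νadd : ∀ a c : Fin (n+2) →₀ ℕ, ν (a + c) = ν a + ν c := by
    intro a c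
    simp [hν, Finsupp.add_apply, add_mul, Finset.sum_add_distrib]
  obtain ⟨b, hbs, hbmax⟩ := f.support.exists_max_image ν (support_nonempty.2 hf0)
  have hbd : b.degree = d := hsupdeg b hbs
  have hbid : ∀ i, b i ≤ d := fun i => (Finsupp.le_degree i b).trans_eq hbd
  have hstrict : ∀ a ∈ f.support, a ≠ b → ν a < ν b := by
    intro a ha hne
    rcases lt_or_eq_of_le (hbmax a ha) with h | h
    · exact h
    · exfalso
      apply hne
      have hff := aux_digit_inj M (n+2) (fun j => a j) (fun j => b j)
        (fun j => by
          show a j < M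
          have : a j ≤ d := (Finsupp.le_degree j a).trans_eq (hsupdeg a ha)
          omega)
        (fun j => by show b j < M; have := hbid j; omega) h
      ext j
      exact congrFun hff j
  -- the exceptional set T and its cardinality
  set T := {e : Fin (n+2) →₀ ℕ // e.degree = k ∧ ¬ b ≤ e} with hT
  have hex : ∀ e : T, ∃ i, e.1 i < b i := by
    intro e
    by_contra h
    push_neg at h
    exact e.2.2 (Finsupp.le_def.2 fun i => h i)
  choose idx hidx using hex
  have hcoordk : ∀ (e : T) (j), e.1 j ≤ k :=
    fun e j => (Finsupp.le_degree j e.1).trans_eq e.2.1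
  let χ : T → Fin (n+2) × Fin d × (Fin n → Fin (k+1)) := fun e =>
    (idx e, ⟨e.1 (idx e), lt_of_lt_of_le (hidx e) (hbid _)⟩,
     fun j => ⟨e.1 ((idx e).succAbove j.castSucc), Nat.lt_succ_of_le (hcoordk e _)⟩)
  have hχ : Function.Injective χ := by
    intro e₁ e₂ h
    simp only [χ, Prod.ext_iff, Fin.ext_iff, funext_iff, Fin.mk.injEq] at h
    obtain ⟨h1, h2, h3⟩ := h
    have h1' : idx e₁ = idx e₂ := Fin.ext h1
    set i := idx e₁ with hi
    rw [← h1'] at h2 h3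
    have hs₁ : ∑ j, e₁.1 j = k := (aux_degree_eq_sum e₁.1).symm.trans e₁.2.1
    have hs₂ : ∑ j, e₂.1 j = k := (aux_degree_eq_sum e₂.1).symm.trans e₂.2.1
    rw [Fin.sum_univ_succAbove _ i, Fin.sum_univ_castSucc] at hs₁ hs₂
    have hsum : (∑ j : Fin n, e₁.1 (i.succAbove j.castSucc))
        = ∑ j : Fin n, e₂.1 (i.succAbove j.castSucc) :=
      Finset.sum_congr rfl fun j _ => h3 j
    have hlast : e₁.1 (i.succAbove (Fin.last n)) = e₂.1 (i.succAbove (Fin.last n)) := by omega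
    apply Subtype.ext
    ext m
    by_cases hm : m = i
    · rw [hm]; exact h2
    · obtain ⟨z, hz⟩ := Fin.exists_succAbove_eq (Ne.intro hm)
      rcases Fin.eq_castSucc_or_eq_last z with ⟨z', hz'⟩ | hz'
      · rw [← hz, hz']; exact h3 z'
      · rw [← hz, hz']; exact hlast
  haveI hTfin : Finite T := Finite.of_injective χ hχ
  have hTcard : Nat.card T ≤ (n+2) * d * (k+1)^n := by
    calc Nat.card T ≤ Nat.card (Fin (n+2) × Fin d × (Fin n → Fin (k+1))) :=
          Nat.card_le_card_of_injective χ hχ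
      _ = (n+2) * d * (k+1)^n := by
          simp [Nat.card_eq_fintype_card]
          ring
  -- agreement on T-monomials implies equality
  have hV : ∀ (l₁ l₂ : H1T (n+2) k d f nrm),
      (∀ e : T, l₁.1 ⟨monomial e.1 1, memV e.1 e.2.1⟩ = l₂.1 ⟨monomial e.1 1, memV e.1 e.2.1⟩) →
      l₁ = l₂ := by
    intro l₁ l₂ hTeq
    have main : ∀ m : ℕ, ∀ e : Fin (n+2) →₀ ℕ, ν e = m → ∀ (he : e.degree = k),
        l₁.1 ⟨monomial e 1, memV e he⟩ = l₂.1 ⟨monomial e 1, memV e he⟩ := by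
      intro m
      induction m using Nat.strong_induction_on with
      | _ m IH =>
        intro e hνe he
        by_cases hble : b ≤ e
        · -- e = b + c : use the relation l (f · x^c) = 0
          set c := e - b with hc
          have hbc : b + c = e := add_tsub_cancel_of_le hble
          have hdegadd : ∀ u v : Fin (n+2) →₀ ℕ, (u + v).degree = u.degree + v.degree := by
            intro u v
            simp [aux_degree_eq_sum, Finsupp.add_apply, Finset.sum_add_distrib]
          have hcdeg : c.degree = k - d := by
            have h1 : e.degree = b.degree + c.degree := by rw [← hbc, hdegadd]
            omega
          have hcmem : (monomial c 1 : MvPolynomial (Fin (n+2)) ℤ) ∈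
              homogeneousSubmodule (Fin (n+2)) ℤ (k - d) :=
            (mem_homogeneousSubmodule _ _).2 (isHomogeneous_monomial _ hcdeg)
          have hwdeg : (f * monomial c 1 : MvPolynomial (Fin (n+2)) ℤ).IsHomogeneous k := by
            have h2 := hf.mul (isHomogeneous_monomial (1:ℤ) hcdeg)
            rwa [Nat.add_sub_cancel' hk] at h2
          set w : Vlat (n+2) k := ⟨f * monomial c 1, (mem_homogeneousSubmodule _ _).2 hwdeg⟩
            with hw
          have hwW : w ∈ Wlat (n+2) f d k := by
            refine Submodule.mem_comap.2 (Submodule.mem_map.2 ⟨monomial c 1, hcmem, ?_⟩)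
            simp [LinearMap.mulLeft_apply, hw]
          have hws : (w : MvPolynomial (Fin (n+2)) ℤ)
              = ∑ a ∈ f.support, monomial (a + c) (f.coeff a) := by
            show f * monomial c 1 = _
            conv_lhs => rw [f.as_sum]
            rw [Finset.sum_mul]
            exact Finset.sum_congr rfl fun a _ => by rw [monomial_mul, mul_one]
          have hadeg : ∀ a ∈ f.support, (a + c).degree = k := by
            intro a ha
            rw [hdegadd, hsupdeg a ha, hcdeg]
            omega
          have e₁ := aux_apply_eq_sum l₁.1 f.support (· + c) f.coeff hadeg w hws
          have e₂ := aux_apply_eq_sum l₂.1 f.support (· + c) f.coeff hadeg w hws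
          rw [l₁.2.1 w hwW] at e₁
          rw [l₂.2.1 w hwW] at e₂
          beta_reduce at e₁ e₂
          set B : {x // x ∈ f.support} := ⟨b, hbs⟩ with hB
          have hsplit₁ := (Finset.add_sum_erase f.support.attach
            (fun a => f.coeff a.1 * l₁.1 ⟨monomial (a.1 + c) 1,
              (mem_homogeneousSubmodule _ _).2 (isHomogeneous_monomial _ (hadeg a.1 a.2))⟩)
            (Finset.mem_attach _ B)).symm
          have hsplit₂ := (Finset.add_sum_erase f.support.attach
            (fun a => f.coeff a.1 * l₂.1 ⟨monomial (a.1 + c) 1,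
              (mem_homogeneousSubmodule _ _).2 (isHomogeneous_monomial _ (hadeg a.1 a.2))⟩)
            (Finset.mem_attach _ B)).symm
          have hrest : ∀ a ∈ f.support.attach.erase B,
              f.coeff a.1 * l₁.1 ⟨monomial (a.1 + c) 1,
                (mem_homogeneousSubmodule _ _).2 (isHomogeneous_monomial _ (hadeg a.1 a.2))⟩
              = f.coeff a.1 * l₂.1 ⟨monomial (a.1 + c) 1,
                (mem_homogeneousSubmodule _ _).2 (isHomogeneous_monomial _ (hadeg a.1 a.2))⟩ := by
            intro a ha
            have hane : a.1 ≠ b := fun hcon =>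
              (Finset.ne_of_mem_erase ha) (Subtype.ext hcon)
            have hνlt : ν (a.1 + c) < m := by
              have hab := hstrict a.1 a.2 hane
              have hbce : ν b + ν c = m := by rw [← νadd, hbc, hνe]
              rw [νadd]
              omega
            rw [IH _ hνlt (a.1 + c) rfl (hadeg a.1 a.2)]
          have hsums : (∑ a ∈ f.support.attach.erase B,
              f.coeff a.1 * l₁.1 ⟨monomial (a.1 + c) 1,
                (mem_homogeneousSubmodule _ _).2 (isHomogeneous_monomial _ (hadeg a.1 a.2))⟩)
              = ∑ a ∈ f.support.attach.erase B,
              f.coeff a.1 * l₂.1 ⟨monomial (a.1 + c) 1,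
                (mem_homogeneousSubmodule _ _).2 (isHomogeneous_monomial _ (hadeg a.1 a.2))⟩ :=
            Finset.sum_congr rfl hrest
          rw [hsplit₁] at e₁
          rw [hsplit₂] at e₂
          have hbterm : f.coeff B.1 * l₁.1 ⟨monomial (B.1 + c) 1,
                (mem_homogeneousSubmodule _ _).2 (isHomogeneous_monomial _ (hadeg B.1 B.2))⟩
              = f.coeff B.1 * l₂.1 ⟨monomial (B.1 + c) 1,
                (mem_homogeneousSubmodule _ _).2 (isHomogeneous_monomial _ (hadeg B.1 B.2))⟩ := by
            linarith [e₁, e₂, hsums]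
          have hcb0 : f.coeff B.1 ≠ 0 := mem_support_iff.1 B.2
          have hkey := mul_left_cancel₀ hcb0 hbterm
          rw [show (⟨monomial e 1, memV e he⟩ : Vlat (n+2) k)
              = ⟨monomial (B.1 + c) 1,
                (mem_homogeneousSubmodule _ _).2 (isHomogeneous_monomial _ (hadeg B.1 B.2))⟩ from
            Subtype.ext (by
              show (monomial e (1:ℤ)) = monomial (B.1 + c) 1
              rw [show (B.1 + c) = e from hbc])]
          exact hkey
        · exact hTeq ⟨e, he, hble⟩
    apply Subtype.ext
    apply LinearMap.ext
    intro s
    have hsdeg : ∀ a ∈ (s : MvPolynomial (Fin (n+2)) ℤ).support,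
        (a : Fin (n+2) →₀ ℕ).degree = k := by
      intro a ha
      rw [Finsupp.degree_eq_weight_one]
      exact ((mem_homogeneousSubmodule _ _).1 s.2) (mem_support_iff.1 ha)
    rw [aux_apply_eq_sum l₁.1 (s : MvPolynomial (Fin (n+2)) ℤ).support (fun a => a)
        (fun a => (s : MvPolynomial (Fin (n+2)) ℤ).coeff a) hsdeg s
        ((s : MvPolynomial (Fin (n+2)) ℤ).as_sum),
      aux_apply_eq_sum l₂.1 (s : MvPolynomial (Fin (n+2)) ℤ).support (fun a => a)
        (fun a => (s : MvPolynomial (Fin (n+2)) ℤ).coeff a) hsdeg s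
        ((s : MvPolynomial (Fin (n+2)) ℤ).as_sum)]
    exact Finset.sum_congr rfl fun a _ => by
      rw [main (ν a.1) a.1 rfl (hsdeg a.1 a.2)]
  -- the injection Φ into T → Fin 3
  have hΦlt : ∀ (l : H1T (n+2) k d f nrm) (e : T),
      (l.1 ⟨monomial e.1 1, memV e.1 e.2.1⟩ + 1).toNat < 3 := by
    intro l e
    have hb1 := hbound l e.1 e.2.1
    rw [abs_le] at hb1
    omega
  let Φ : H1T (n+2) k d f nrm → (T → Fin 3) := fun l e =>
    ⟨(l.1 ⟨monomial e.1 1, memV e.1 e.2.1⟩ + 1).toNat, hΦlt l e⟩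
  have hΦ : Function.Injective Φ := by
    intro l₁ l₂ h
    apply hV
    intro e
    have h' := congrFun h e
    simp only [Φ, Fin.mk.injEq] at h'
    have b₁ := hbound l₁ e.1 e.2.1
    have b₂ := hbound l₂ e.1 e.2.1
    rw [abs_le] at b₁ b₂
    omega
  haveI hfin : Finite (H1T (n+2) k d f nrm) := Finite.of_injective Φ hΦ
  haveI hne : Nonempty (H1T (n+2) k d f nrm) :=
    ⟨⟨0, fun s _ => rfl, 0, fun s => by simp, fun v => by simpa using hnn v⟩⟩
  refine ⟨Nat.card_pos, ?_⟩
  calc Nat.card (H1T (n+2) k d f nrm) ≤ Nat.card (T → Fin 3) :=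
        Nat.card_le_card_of_injective Φ hΦ
    _ = 3 ^ Nat.card T := by
        rw [Nat.card_fun]
        simp [Nat.card_eq_fintype_card]
    _ ≤ 3 ^ ((n+2) * d * (k+1)^n) := Nat.pow_le_pow_right (by norm_num) hTcard

/-- Lemma 3.1 of the paper (`ĥ¹` of the quotient lattice of a hypersurface is `o(k^N)`):
let `f ∈ ℤ[x₀,…,x_N]` be nonzero homogeneous of degree `d ≥ 1` and, for each `k ≥ d`, let
`‖·‖_k` be any norm on `V_k ⊗ ℝ` with `‖x^a‖_k ≤ 1` for all `|a| = k`.  A `ℤ`-linear map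
`λ : Q_k → ℤ` corresponds to a `ℤ`-linear `λ : V_k → ℤ` vanishing on `f·V_{k−d}`; `H¹_k`
consists of those whose `ℝ`-linear extension `Λ` to `V_k ⊗ ℝ` has dual norm at most `1`
(i.e. `|Λ(v)| ≤ ‖v‖_k` for all `v`). Then `lim_k (N!/k^N)·log #H¹_k = 0`. -/
theorem h1_quotient_is_little_o
    (N d : ℕ) (hN : 1 ≤ N) (hd : 1 ≤ d)
    (f : MvPolynomial (Fin (N+1)) ℤ) (hf0 : f ≠ 0) (hf : f.IsHomogeneous d)
    (nrm : (k : ℕ) → VR (N+1) k → ℝ)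
    (hnrm_nonneg : ∀ k v, 0 ≤ nrm k v)
    (hnrm_zero : ∀ k (v : VR (N+1) k), nrm k v = 0 → v = 0)
    (hnrm_add : ∀ k (v w : VR (N+1) k), nrm k (v + w) ≤ nrm k v + nrm k w)
    (hnrm_smul : ∀ k (c : ℝ) (v : VR (N+1) k), nrm k (c • v) = |c| * nrm k v)
    (hnrm_monomial : ∀ k (a : Fin (N+1) →₀ ℕ) (ha : (∑ j, a j) = k),
      nrm k ⟨monomial a 1, (mem_homogeneousSubmodule _ _).2
        (isHomogeneous_monomial _ (by
          rw [Finsupp.degree_apply, Finset.sum_subset (Finset.subset_univ a.support)]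
          · exact ha
          · intro x _ hx
            simpa using Finsupp.notMem_support_iff.mp hx))⟩ ≤ 1) :
    Tendsto (fun k : ℕ =>
        (N.factorial : ℝ) / (k : ℝ) ^ N *
          Real.log (Nat.card
            {l : Vlat (N+1) k →ₗ[ℤ] ℤ //
              (∀ s ∈ Wlat (N+1) f d k, l s = 0) ∧
              ∃ Λ : VR (N+1) k →ₗ[ℝ] ℝ,
                (∀ s : Vlat (N+1) k,
                  Λ ⟨(s : MvPolynomial (Fin (N+1)) ℤ).map (Int.castRingHom ℝ),
                      (mem_homogeneousSubmodule _ _).2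
                        (((mem_homogeneousSubmodule _ _).1 s.2).map _)⟩
                    = (l s : ℝ)) ∧
                ∀ v : VR (N+1) k, |Λ v| ≤ nrm k v}))
      atTop (nhds 0) := by
  obtain ⟨n, rfl⟩ : ∃ n, N = n + 1 := ⟨N - 1, by omega⟩
  set C : ℝ := ((n+1).factorial : ℝ) * (((n+2) * d * 2^n : ℕ) : ℝ) * Real.log 3 with hC
  refine tendsto_of_tendsto_of_tendsto_of_le_of_le' (g := fun _ => (0:ℝ))
    (h := fun k : ℕ => C / k) tendsto_const_nhds
    (tendsto_const_div_atTop_nhds_zero_nat C) ?_ ?_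
  · exact Eventually.of_forall fun k =>
      mul_nonneg (by positivity) (aux_log_nat_nonneg _)
  · filter_upwards [eventually_ge_atTop (max d 1)] with k hk
    have hdk : d ≤ k := le_trans (le_max_left _ _) hk
    have hk1 : 1 ≤ k := le_trans (le_max_right _ _) hk
    obtain ⟨hpos, hcard⟩ := aux_card n d k hd hdk f hf0 hf (nrm k) (hnrm_nonneg k)
      (fun a ha h => hnrm_monomial k a ha)
    show ((n+1).factorial : ℝ) / (k : ℝ) ^ (n+1) *
        Real.log (Nat.card (H1T (n+2) k d f (nrm k))) ≤ C / k
    have hkne : (k : ℝ) ≠ 0 := by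
      have : (0:ℝ) < k := by exact_mod_cast hk1
      exact this.ne'
    have hm : ((n+2) * d * (k+1)^n : ℕ) ≤ ((n+2) * d * 2^n) * k^n := by
      have h1 : (k+1)^n ≤ (2*k)^n := Nat.pow_le_pow_left (by omega) n
      calc (n+2) * d * (k+1)^n ≤ (n+2) * d * ((2*k)^n) := Nat.mul_le_mul_left _ h1
        _ = ((n+2) * d * 2^n) * k^n := by rw [mul_pow]; ring
    have hlog : Real.log (Nat.card (H1T (n+2) k d f (nrm k)))
        ≤ (((n+2) * d * 2^n : ℕ) : ℝ) * (k:ℝ)^n * Real.log 3 := by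
      have hlog3 : (0:ℝ) ≤ Real.log 3 := Real.log_nonneg (by norm_num)
      calc Real.log (Nat.card (H1T (n+2) k d f (nrm k)))
          ≤ Real.log ((3:ℝ) ^ ((n+2) * d * (k+1)^n)) := by
            apply Real.log_le_log (by exact_mod_cast hpos)
            exact_mod_cast hcard
        _ = (((n+2) * d * (k+1)^n : ℕ) : ℝ) * Real.log 3 := by
            rw [Real.log_pow]
        _ ≤ (((n+2) * d * 2^n : ℕ) : ℝ) * (k:ℝ)^n * Real.log 3 := by
            apply mul_le_mul_of_nonneg_right _ hlog3
            push_cast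
            exact_mod_cast hm
    calc ((n+1).factorial : ℝ) / (k : ℝ) ^ (n+1) *
          Real.log (Nat.card (H1T (n+2) k d f (nrm k)))
        ≤ ((n+1).factorial : ℝ) / (k : ℝ) ^ (n+1) *
          ((((n+2) * d * 2^n : ℕ) : ℝ) * (k:ℝ)^n * Real.log 3) :=
          mul_le_mul_of_nonneg_left hlog (by positivity)
      _ = C / k := by
          rw [hC]
          field_simp
          ring
end
end

section
/- Let f ∈ ℝ[x₀,…,x_N] be a nonzero homogeneous polynomial of degree d (N ≥ 1) and let k ≥ d. Then the number of ℝ-linear maps λ : ℝ[x₀,…,x_N]_k → ℝ on the space of real homogeneous polynomials of degree k such that λ(f·g) = 0 for every g ∈ ℝ[x₀,…,x_N]_{k−d} and λ(x^a) ∈ {−1, 0, 1} for every multi-index a with |a| = k, is at most 3^{C(k+N,N) − C(k−d+N,N)}. -/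
open MvPolynomial

noncomputable section

/-- eq of sets of exponents -/
def degEquiv (n m : ℕ) :
    Sym (Fin n) m ≃ ↥{d : Fin n →₀ ℕ | d.degree = m} :=
  (Sym.equivNatSum (Fin n) m).trans <| Equiv.subtypeEquivRight fun P => by
    simp [Finsupp.degree_apply, Finsupp.sum, Set.mem_setOf_eq]

instance (n m : ℕ) : Fintype ↥{d : Fin n →₀ ℕ | d.degree = m} :=
  Fintype.ofEquiv _ (degEquiv n m)

def VRbasis (n m : ℕ) : Module.Basis ↥{d : Fin n →₀ ℕ | d.degree = m} ℝ (VR n m) :=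
  (MvPolynomial.basisRestrictSupport ℝ _).map
    (LinearEquiv.ofEq _ _ (homogeneousSubmodule_eq_finsupp_supported (Fin n) ℝ m).symm)

instance (n m : ℕ) : FiniteDimensional ℝ (VR n m) :=
  Module.Finite.of_basis (VRbasis n m)

lemma finrank_VR (n m : ℕ) :
    Module.finrank ℝ (VR n m) = (n + m - 1).choose m := by
  rw [Module.finrank_eq_card_basis (VRbasis n m), ← Fintype.card_congr (degEquiv n m),
    Sym.card_sym_eq_choose, Fintype.card_fin]

lemma count_aux {ι : Type*} [Fintype ι] (W : Submodule ℝ (ι → ℝ)) {T : Type*}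
    (F : T → (ι → ℝ)) (hinj : Function.Injective F) (hW : ∀ t, F t ∈ W)
    (hS : ∀ t i, F t i ∈ ({-1, 0, 1} : Set ℝ)) :
    Nat.card T ≤ 3 ^ Module.finrank ℝ W := by
  classical
  set φ : ι → Module.Dual ℝ W := fun i => (LinearMap.proj i).comp W.subtype with hφ
  have hspan : Submodule.span ℝ (Set.range φ) = ⊤ := by
    have hco : (Submodule.span ℝ (Set.range φ)).dualCoannihilator = ⊥ := by
      rw [eq_bot_iff]
      intro w hw
      rw [Submodule.mem_dualCoannihilator] at hw
      have hz : ∀ i, (w : ι → ℝ) i = 0 := fun i =>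
        hw (φ i) (Submodule.subset_span ⟨i, rfl⟩)
      simpa [Submodule.mem_bot] using Subtype.ext (funext hz)
    have h2 := Subspace.finrank_add_finrank_dualCoannihilator_eq
      (Submodule.span ℝ (Set.range φ))
    rw [hco, finrank_bot, add_zero] at h2
    apply Submodule.eq_top_of_finrank_eq
    rw [h2, Subspace.dual_finrank_eq]
  obtain ⟨b, hbsub, hbspan, hbind⟩ := exists_linearIndependent ℝ (Set.range φ)
  rw [hspan] at hbspan
  haveI : Finite ↥b := hbind.finite
  haveI : Fintype ↥b := Fintype.ofFinite _
  have hbcard : Nat.card ↥b = Module.finrank ℝ W := by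
    have h3 := finrank_span_set_eq_card hbind
    rw [hbspan, finrank_top, Subspace.dual_finrank_eq] at h3
    rw [Nat.card_eq_fintype_card, ← Set.toFinset_card, ← h3]
  choose ind hind using fun β : b => hbsub β.2
  set S : Set ℝ := {-1, 0, 1} with hSdef
  haveI : Finite ↥S := Set.Finite.to_subtype (by
    exact (Set.finite_singleton 1).insert 0 |>.insert (-1))
  set G : T → (↥b → ↥S) := fun t β => ⟨F t (ind β), hS t (ind β)⟩ with hG
  have hGinj : Function.Injective G := by
    intro t₁ t₂ h
    apply hinj
    have key : ∀ ψ : Module.Dual ℝ W,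
        ψ ((⟨F t₁, hW t₁⟩ : W) - ⟨F t₂, hW t₂⟩) = 0 := by
      intro ψ
      have hψ : ψ ∈ Submodule.span ℝ b := by rw [hbspan]; trivial
      induction hψ using Submodule.span_induction with
      | mem ψ' hψ' =>
        have := congrFun h (⟨ψ', hψ'⟩ : b)
        have hval : F t₁ (ind ⟨ψ', hψ'⟩) = F t₂ (ind ⟨ψ', hψ'⟩) := congrArg Subtype.val this
        have hφeq : φ (ind (⟨ψ', hψ'⟩ : b)) = ψ' := hind (⟨ψ', hψ'⟩ : b)
        rw [map_sub, ← hφeq]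
        simpa [hφ] using sub_eq_zero.mpr hval
      | zero => simp
      | add x y _ _ hx hy => rw [LinearMap.add_apply, hx, hy, add_zero]
      | smul c x _ hx => rw [LinearMap.smul_apply, hx, smul_zero]
    have := sub_eq_zero.mp ((Module.forall_dual_apply_eq_zero_iff ℝ _).mp key)
    exact congrArg Subtype.val this
  calc Nat.card T ≤ Nat.card (↥b → ↥S) := Nat.card_le_card_of_injective G hGinj
    _ = Nat.card ↥S ^ Nat.card ↥b := Nat.card_fun
    _ ≤ 3 ^ Module.finrank ℝ W := by
        rw [hbcard]
        gcongr
        · have : S.ncard = 3 := by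
            rw [hSdef, Set.ncard_insert_of_notMem (by norm_num)
              (((Set.finite_singleton 1).insert 0)),
              Set.ncard_insert_of_notMem (by norm_num) (Set.finite_singleton 1),
              Set.ncard_singleton]
          rw [← Nat.card_coe_set_eq] at this
          omega

lemma sumdeg {n : ℕ} (a : Fin n →₀ ℕ) : (∑ j, a j) = a.degree := by
  rw [Finsupp.degree_apply]
  exact (Finset.sum_subset (Finset.subset_univ _) (fun x _ hx => by
    simpa using Finsupp.notMem_support_iff.mp hx)).symm

/-- The counting argument of the paper's Lemma 3.1: for a nonzero homogeneous
`f ∈ ℝ[x₀,…,x_N]` of degree `d` and `k ≥ d`, the number of `ℝ`-linear maps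
`λ : ℝ[x₀,…,x_N]_k → ℝ` annihilating `f·ℝ[x₀,…,x_N]_{k−d}` and taking values in
`{−1,0,1}` on all monomials `x^a`, `|a| = k`, is at most
`3^(C(k+N,N) − C(k−d+N,N))`. -/
theorem card_annihilating_sign_functionals_le
    (N d k : ℕ) (hN : 1 ≤ N) (hkd : d ≤ k)
    (f : MvPolynomial (Fin (N+1)) ℝ) (hf0 : f ≠ 0) (hf : f.IsHomogeneous d) :
    Nat.card
      {l : VR (N+1) k →ₗ[ℝ] ℝ //
        (∀ g : MvPolynomial (Fin (N+1)) ℝ, ∀ hg : g.IsHomogeneous (k - d),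
          l ⟨f * g, (mem_homogeneousSubmodule _ _).2
            (by have := hf.mul hg; rwa [Nat.add_sub_cancel' hkd] at this)⟩ = 0) ∧
        (∀ a : Fin (N+1) →₀ ℕ, ∀ ha : (∑ j, a j) = k,
          l ⟨monomial a 1, (mem_homogeneousSubmodule _ _).2
            (isHomogeneous_monomial _ (by
              rw [Finsupp.degree_apply, Finset.sum_subset (Finset.subset_univ a.support)]
              · exact ha
              · intro x _ hx
                simpa using Finsupp.notMem_support_iff.mp hx))⟩
            ∈ ({-1, 0, 1} : Set ℝ))}
      ≤ 3 ^ (Nat.choose (k+N) N - Nat.choose (k-d+N) N) := by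
  classical
  set ι := ↥{a : Fin (N+1) →₀ ℕ | a.degree = k} with hι
  have pf : ∀ a : ι, monomial a.1 (1:ℝ) ∈ VR (N+1) k := fun a =>
    (mem_homogeneousSubmodule _ _).2 (isHomogeneous_monomial _ a.2)
  set mono : ι → VR (N+1) k := fun a => ⟨monomial a.1 1, pf a⟩ with hmono
  set Ψ : ((VR (N+1) k) →ₗ[ℝ] ℝ) →ₗ[ℝ] (ι → ℝ) :=
    LinearMap.pi (fun a => LinearMap.applyₗ (mono a)) with hΨ
  -- Ψ is injective
  have hΨinj : Function.Injective Ψ := by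
    rw [injective_iff_map_eq_zero]
    intro l hl
    have hl' : ∀ a : ι, l (mono a) = 0 := fun a => congrFun hl a
    ext x
    obtain ⟨p, hp⟩ := x
    have hph : p.IsHomogeneous k := (mem_homogeneousSubmodule _ _).1 hp
    have hdeg : ∀ a ∈ p.support, (a : Fin (N+1) →₀ ℕ).degree = k := by
      intro a ha
      have := hph (mem_support_iff.mp ha)
      rwa [Finsupp.degree_eq_weight_one]
    have hxe : (⟨p, hp⟩ : VR (N+1) k) =
        ∑ a ∈ p.support.attach, (coeff a.1 p) • mono ⟨a.1, hdeg a.1 a.2⟩ := by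
      apply Subtype.ext
      push_cast
      simp only [hmono, smul_monomial, smul_eq_mul, mul_one]
      rw [Finset.sum_attach p.support (fun a => monomial a (coeff a p))]
      exact (p.support_sum_monomial_coeff).symm
    rw [hxe, map_sum]
    simp only [map_smul, hl', smul_zero, Finset.sum_const_zero, LinearMap.zero_apply]
  -- the multiplication-by-f map
  have hmul : ∀ g : VR (N+1) (k-d), f * (g : MvPolynomial (Fin (N+1)) ℝ) ∈ VR (N+1) k := by
    intro g
    have hg : (g : MvPolynomial (Fin (N+1)) ℝ).IsHomogeneous (k-d) :=
      (mem_homogeneousSubmodule _ _).1 g.2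
    exact (mem_homogeneousSubmodule _ _).2
      (by have := hf.mul hg; rwa [Nat.add_sub_cancel' hkd] at this)
  set mulf : VR (N+1) (k-d) →ₗ[ℝ] VR (N+1) k :=
    LinearMap.codRestrict _ ((LinearMap.mulLeft ℝ f).comp (VR (N+1) (k-d)).subtype) hmul
    with hmulf
  have hmulinj : Function.Injective mulf := by
    rw [injective_iff_map_eq_zero]
    intro g hg
    have h0 : f * (g : MvPolynomial (Fin (N+1)) ℝ) = 0 := by
      have := congrArg (Subtype.val) hg
      exact this
    rcases mul_eq_zero.mp h0 with h | h
    · exact absurd h hf0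
    · exact Subtype.ext h
  set U : Submodule ℝ (VR (N+1) k) := LinearMap.range mulf with hU
  set A := U.dualAnnihilator with hA
  set W := A.map Ψ with hW
  -- apply the counting lemma
  refine le_trans (count_aux W (fun t => Ψ t.1)
    (fun t₁ t₂ h => Subtype.ext (hΨinj h)) ?_ ?_) ?_
  · intro t
    refine Submodule.mem_map_of_mem ?_
    rw [hA, Submodule.mem_dualAnnihilator]
    intro w hw
    rw [hU, LinearMap.mem_range] at hw
    obtain ⟨g, rfl⟩ := hw
    have hgh : ((g : VR (N+1) (k-d)) : MvPolynomial (Fin (N+1)) ℝ).IsHomogeneous (k-d) :=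
      (mem_homogeneousSubmodule _ _).1 g.2
    have ht := t.2.1 g hgh
    convert ht using 2
    exact Subtype.ext rfl
  · intro t a
    show t.1 (mono a) ∈ ({-1, 0, 1} : Set ℝ)
    have ht := t.2.2 a.1 ((sumdeg a.1).trans a.2)
    convert ht using 2
  apply Nat.pow_le_pow_right (by norm_num)
  -- dimension bound
  have h1 : Module.finrank ℝ W ≤ Module.finrank ℝ A := Submodule.finrank_map_le _ _
  have h2 : Module.finrank ℝ A = Module.finrank ℝ (VR (N+1) k ⧸ U) :=
    (LinearEquiv.finrank_eq (Subspace.quotEquivAnnihilator U)).symm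
  have h3 := Submodule.finrank_quotient_add_finrank U
  have h4 : Module.finrank ℝ U = Module.finrank ℝ (VR (N+1) (k-d)) :=
    LinearMap.finrank_range_of_inj hmulinj
  have h5 := finrank_VR (N+1) k
  have h6 := finrank_VR (N+1) (k-d)
  have e5 : (N + 1 + k - 1).choose k = (k+N).choose N := by
    rw [show N + 1 + k - 1 = k + N by omega]
    rw [← Nat.choose_symm (Nat.le_add_right k N), show k + N - k = N by omega]
  have e6 : (N + 1 + (k-d) - 1).choose (k-d) = (k-d+N).choose N := by
    rw [show N + 1 + (k-d) - 1 = (k-d) + N by omega]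
    rw [← Nat.choose_symm (Nat.le_add_right (k-d) N), show k - d + N - (k-d) = N by omega]
  omega
end
end

section
/- Let S = {x ∈ ℂ^{N+1} : |x₀|² + ⋯ + |x_N|² = 1} and let μ be a Borel probability measure on S invariant under the coordinatewise torus action x ↦ (u₀x₀,…,u_Nx_N), |u_j| = 1. For δ ∈ (0,1) let A_δ = {x ∈ S : min_j |x_j| ≥ δ · max_j |x_j|}. Then for every real p ≥ 1, every k ≥ 1, every δ ∈ (0,1), and every homogeneous polynomial s = Σ_{|a|=k} c_a x^a of degree k with complex coefficients: δ^{2k} · (N+1)^{−2k/p} · μ(A_δ) · Σ_a |c_a|² ≤ ∫_S |s(x)|² · (Σ_{j=0}^N |x_j|^p)^{−2k/p} dμ(x) ≤ Σ_a |c_a|². -/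
open MeasureTheory MvPolynomial

noncomputable section

/-- The unit sphere `S = {x ∈ ℂ^{N+1} : Σ |x_j|² = 1}`. -/
def cxSphere (n : ℕ) : Set (Fin n → ℂ) := {x | ∑ j, ‖x j‖ ^ 2 = 1}

/-- `A_δ = {x ∈ S : min_j |x_j| ≥ δ · max_j |x_j|}`. -/
def cornerSet (n : ℕ) (δ : ℝ) : Set (Fin n → ℂ) :=
  {x | x ∈ cxSphere n ∧ δ * (⨆ j, ‖x j‖) ≤ ⨅ j, ‖x j‖}

/- ### Auxiliary lemmas -/

lemma charSum (M : ℕ) (hM : 0 < M) (d : ℤ) :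
    ∑ r : Fin M, Complex.exp (2 * Real.pi * Complex.I * d / M) ^ (r : ℕ)
      = if (M:ℤ) ∣ d then (M:ℂ) else 0 := by
  set z : ℂ := Complex.exp (2 * Real.pi * Complex.I * d / M) with hz
  have hMC : (M:ℂ) ≠ 0 := Nat.cast_ne_zero.mpr hM.ne'
  have h2 : (2 : ℂ) * Real.pi * Complex.I ≠ 0 := by
    simp [Real.pi_ne_zero, Complex.I_ne_zero]
  have hz1 : z = 1 ↔ (M:ℤ) ∣ d := by
    rw [hz, Complex.exp_eq_one_iff]
    constructor
    · rintro ⟨m, hm⟩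
      refine ⟨m, ?_⟩
      have : (d : ℂ) = M * m := by
        field_simp at hm
        linear_combination hm
      exact_mod_cast this
    · rintro ⟨m, rfl⟩
      exact ⟨m, by field_simp; push_cast; ring⟩
  by_cases h : (M:ℤ) ∣ d
  · simp [hz1.mpr h, h]
  · rw [if_neg h]
    have hzne : z ≠ 1 := fun hh => h (hz1.mp hh)
    rw [Fin.sum_univ_eq_sum_range (fun r => z ^ r), geom_sum_eq hzne]
    have hzM : z ^ M = 1 := by
      rw [hz, ← Complex.exp_nat_mul, Complex.exp_eq_one_iff]
      exact ⟨d, by field_simp⟩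
    simp [hzM]

lemma ze_combine (M : ℕ) (r aj bj : ℕ) :
    Complex.exp (2 * Real.pi * Complex.I * (r:ℂ) / M) ^ aj *
      (starRingEnd ℂ) (Complex.exp (2 * Real.pi * Complex.I * (r:ℂ) / M) ^ bj)
    = Complex.exp (2 * Real.pi * Complex.I * ((((aj:ℤ) - (bj:ℤ)) : ℤ) : ℂ) / M) ^ r := by
  rw [map_pow, ← Complex.exp_conj]
  have hconj : (starRingEnd ℂ) (2 * ↑Real.pi * Complex.I * (r:ℂ) / M)
      = -(2 * ↑Real.pi * Complex.I * (r:ℂ) / M) := by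
    simp [map_div₀, Complex.conj_I, map_ofNat]
    ring
  rw [hconj, ← Complex.exp_nat_mul, ← Complex.exp_nat_mul, ← Complex.exp_add,
    ← Complex.exp_nat_mul]
  congr 1
  push_cast
  ring

lemma key_charsum (n M : ℕ) (hM : 0 < M) (a b : Fin n →₀ ℕ)
    (ha : ∀ j, a j < M) (hb : ∀ j, b j < M) :
    ∑ t : Fin n → Fin M,
        (∏ j, Complex.exp (2 * Real.pi * Complex.I * ((t j : ℕ) : ℂ) / M) ^ (a j)) *
          (starRingEnd ℂ) (∏ j, Complex.exp (2 * Real.pi * Complex.I * ((t j : ℕ) : ℂ) / M) ^ (b j))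
      = if a = b then ((M:ℂ))^n else 0 := by
  have hterm : ∀ t : Fin n → Fin M,
      (∏ j, Complex.exp (2 * Real.pi * Complex.I * ((t j : ℕ) : ℂ) / M) ^ (a j)) *
        (starRingEnd ℂ) (∏ j, Complex.exp (2 * Real.pi * Complex.I * ((t j : ℕ) : ℂ) / M) ^ (b j))
      = ∏ j, Complex.exp (2 * Real.pi * Complex.I * ((((a j : ℤ) - (b j : ℤ)) : ℤ) : ℂ) / M) ^ ((t j : ℕ)) := by
    intro t
    rw [map_prod, ← Finset.prod_mul_distrib]
    exact Finset.prod_congr rfl fun j _ => ze_combine M (t j) (a j) (b j)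
  simp_rw [hterm]
  rw [← Fintype.piFinset_univ, ← Finset.prod_univ_sum
    (t := fun _ : Fin n => (Finset.univ : Finset (Fin M)))
    (f := fun j (r : Fin M) =>
      Complex.exp (2 * Real.pi * Complex.I * ((((a j : ℤ) - (b j : ℤ)) : ℤ) : ℂ) / M) ^ (r : ℕ))]
  have hin : ∀ j, (∑ r : Fin M,
        Complex.exp (2 * Real.pi * Complex.I * ((((a j : ℤ) - (b j : ℤ)) : ℤ) : ℂ) / M) ^ (r : ℕ))
      = if (M:ℤ) ∣ ((a j : ℤ) - (b j : ℤ)) then (M:ℂ) else 0 :=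
    fun j => charSum M hM _
  simp_rw [hin]
  by_cases hab : a = b
  · subst hab; simp
  · rw [if_neg hab]
    have hex : ∃ j, ¬ ((M:ℤ) ∣ ((a j : ℤ) - (b j : ℤ))) := by
      by_contra hcon
      push_neg at hcon
      apply hab
      ext j
      have hd := hcon j
      rcases eq_or_ne ((a j : ℤ) - (b j : ℤ)) 0 with h | h
      · omega
      · exfalso
        have h2 := Int.le_of_dvd (abs_pos.mpr h) ((dvd_abs _ _).mpr hd)
        have h1 : |(a j : ℤ) - (b j : ℤ)| < M := by
          rw [abs_sub_lt_iff]
          have := ha j; have := hb j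
          omega
        omega
    obtain ⟨j, hj⟩ := hex
    exact Finset.prod_eq_zero (Finset.mem_univ j) (by rw [if_neg hj])

lemma avg_identity (n M : ℕ) (hM : 0 < M) (x : Fin n → ℂ)
    (T : Finset (Fin n →₀ ℕ)) (c : (Fin n →₀ ℕ) → ℂ)
    (hT : ∀ a ∈ T, ∀ j, a j < M) :
    ∑ t : Fin n → Fin M,
        Complex.normSq (∑ a ∈ T, c a *
          ∏ j, (Complex.exp (2 * Real.pi * Complex.I * ((t j : ℕ) : ℂ) / M) * x j) ^ (a j))
      = (M:ℝ)^n * ∑ a ∈ T, Complex.normSq (c a) * ∏ j, Complex.normSq (x j) ^ (a j) := by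
  classical
  set E : (Fin n → Fin M) → Fin n → ℂ :=
    fun t j => Complex.exp (2 * Real.pi * Complex.I * ((t j : ℕ) : ℂ) / M) with hE
  set X : (Fin n →₀ ℕ) → ℂ := fun a => ∏ j, x j ^ (a j) with hX
  set P : (Fin n →₀ ℕ) → (Fin n → Fin M) → ℂ := fun a t => ∏ j, E t j ^ (a j) with hP
  have hS : ∀ t, (∑ a ∈ T, c a * ∏ j, (E t j * x j) ^ (a j))
      = ∑ a ∈ T, (c a * X a) * P a t := by
    intro t
    refine Finset.sum_congr rfl fun a _ => ?_
    simp_rw [mul_pow]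
    rw [Finset.prod_mul_distrib, hX, hP]
    ring
  have hkey : ∀ a ∈ T, ∀ b ∈ T, ∑ t : Fin n → Fin M, P a t * (starRingEnd ℂ) (P b t)
      = if a = b then ((M:ℂ))^n else 0 := by
    intro a haT b hbT
    exact key_charsum n M hM a b (hT a haT) (hT b hbT)
  have hC : ∑ t : Fin n → Fin M,
      ((∑ a ∈ T, (c a * X a) * P a t) * (starRingEnd ℂ) (∑ a ∈ T, (c a * X a) * P a t))
      = (M:ℂ)^n * ∑ a ∈ T, (c a * (starRingEnd ℂ) (c a)) * (X a * (starRingEnd ℂ) (X a)) := by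
    have expand : ∀ t, (∑ a ∈ T, (c a * X a) * P a t) *
          (starRingEnd ℂ) (∑ a ∈ T, (c a * X a) * P a t)
        = ∑ a ∈ T, ∑ b ∈ T,
            (((c a * X a) * (starRingEnd ℂ) (c b * X b)) * (P a t * (starRingEnd ℂ) (P b t))) := by
      intro t
      rw [map_sum, Finset.sum_mul_sum]
      refine Finset.sum_congr rfl fun a _ => Finset.sum_congr rfl fun b _ => ?_
      rw [map_mul]; ring
    simp_rw [expand]
    rw [Finset.sum_comm]
    have swap2 : ∀ a ∈ T, ∑ t : Fin n → Fin M, ∑ b ∈ T,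
          (((c a * X a) * (starRingEnd ℂ) (c b * X b)) * (P a t * (starRingEnd ℂ) (P b t)))
        = ∑ b ∈ T, ((c a * X a) * (starRingEnd ℂ) (c b * X b)) *
            (∑ t : Fin n → Fin M, P a t * (starRingEnd ℂ) (P b t)) := by
      intro a haT
      rw [Finset.sum_comm]
      exact Finset.sum_congr rfl fun b _ => by rw [Finset.mul_sum]
    rw [Finset.sum_congr rfl swap2]
    have diag : ∀ a ∈ T, ∑ b ∈ T, ((c a * X a) * (starRingEnd ℂ) (c b * X b)) *
          (∑ t : Fin n → Fin M, P a t * (starRingEnd ℂ) (P b t))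
        = ((c a * X a) * (starRingEnd ℂ) (c a * X a)) * (M:ℂ)^n := by
      intro a haT
      have : ∀ b ∈ T, ((c a * X a) * (starRingEnd ℂ) (c b * X b)) *
            (∑ t : Fin n → Fin M, P a t * (starRingEnd ℂ) (P b t))
          = if a = b then ((c a * X a) * (starRingEnd ℂ) (c b * X b)) * (M:ℂ)^n else 0 := by
        intro b hbT
        rw [hkey a haT b hbT]
        split_ifs <;> simp
      rw [Finset.sum_congr rfl this, Finset.sum_ite_eq T a
        (fun b => ((c a * X a) * (starRingEnd ℂ) (c b * X b)) * (M:ℂ)^n), if_pos haT]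
    rw [Finset.sum_congr rfl diag, Finset.mul_sum]
    refine Finset.sum_congr rfl fun a _ => ?_
    rw [map_mul]; ring
  apply Complex.ofReal_injective
  push_cast
  calc (∑ t : Fin n → Fin M, (Complex.normSq (∑ a ∈ T, c a * ∏ j, (E t j * x j) ^ (a j)) : ℂ))
      = ∑ t : Fin n → Fin M,
          ((∑ a ∈ T, (c a * X a) * P a t) * (starRingEnd ℂ) (∑ a ∈ T, (c a * X a) * P a t)) := by
        refine Finset.sum_congr rfl fun t _ => ?_
        rw [Complex.mul_conj, hS t]
    _ = (M:ℂ)^n * ∑ a ∈ T, (c a * (starRingEnd ℂ) (c a)) * (X a * (starRingEnd ℂ) (X a)) := hC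
    _ = (M:ℂ)^n * ∑ a ∈ T, (Complex.normSq (c a) : ℂ) * ∏ j, (Complex.normSq (x j) : ℂ) ^ (a j) := by
        refine congrArg _ (Finset.sum_congr rfl fun a _ => ?_)
        rw [Complex.mul_conj]
        congr 1
        rw [hX, map_prod, ← Finset.prod_mul_distrib]
        exact Finset.prod_congr rfl fun j _ => by rw [map_pow, ← mul_pow, Complex.mul_conj]

lemma sum_rpow_pos {n : ℕ} (p : ℝ) (x : Fin n → ℂ)
    (hx : ∑ j, ‖x j‖ ^ 2 = 1) :
    0 < ∑ j, ‖x j‖ ^ p := by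
  have hex : ∃ j, ‖x j‖ ≠ 0 := by
    by_contra h
    push_neg at h
    simp [h] at hx
  obtain ⟨j, hj⟩ := hex
  have h1 : 0 < ‖x j‖ ^ p :=
    Real.rpow_pos_of_pos (lt_of_le_of_ne (norm_nonneg _) (Ne.symm hj)) p
  refine lt_of_lt_of_le h1 ?_
  exact Finset.single_le_sum (fun i _ => Real.rpow_nonneg (norm_nonneg _) p)
    (Finset.mem_univ j)

lemma abs_le_sum_rpow {n : ℕ} (p : ℝ) (hp : 1 ≤ p) (x : Fin n → ℂ)
    (hx : ∑ j, ‖x j‖ ^ 2 = 1) (j : Fin n) :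
    ‖x j‖ ≤ (∑ i, ‖x i‖ ^ p) ^ (1/p) := by
  have hp0 : 0 < p := lt_of_lt_of_le one_pos hp
  have h1 : ‖x j‖ ^ p ≤ ∑ i, ‖x i‖ ^ p :=
    Finset.single_le_sum (fun i _ => Real.rpow_nonneg (norm_nonneg _) p)
      (Finset.mem_univ j)
  have h2 := Real.rpow_le_rpow (Real.rpow_nonneg (norm_nonneg _) p) h1
    (le_of_lt (by positivity : (0:ℝ) < 1/p))
  rwa [← Real.rpow_mul (norm_nonneg _), mul_one_div, div_self hp0.ne',
    Real.rpow_one] at h2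

lemma upper_pointwise {n k : ℕ} (p : ℝ) (hp : 1 ≤ p) (x : Fin n → ℂ)
    (hx : ∑ j, ‖x j‖ ^ 2 = 1) (a : Fin n →₀ ℕ) (hdeg : ∑ j, a j = k) :
    (∏ j, ‖x j‖ ^ (2 * a j)) *
      (∑ j, ‖x j‖ ^ p) ^ (-(2*(k:ℝ))/p) ≤ 1 := by
  have hp0 : 0 < p := lt_of_lt_of_le one_pos hp
  set Sp := ∑ j, ‖x j‖ ^ p with hSp
  have hSpos : 0 < Sp := sum_rpow_pos p x hx
  have hprod : (∏ j, ‖x j‖ ^ (2 * a j)) ≤ Sp ^ ((2*(k:ℝ))/p) := by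
    calc (∏ j, ‖x j‖ ^ (2 * a j))
        ≤ ∏ j, (Sp ^ (1/p)) ^ (2 * a j) :=
          Finset.prod_le_prod (fun j _ => pow_nonneg (norm_nonneg _) _)
            (fun j _ => pow_le_pow_left₀ (norm_nonneg _) (abs_le_sum_rpow p hp x hx j) _)
      _ = (Sp ^ (1/p)) ^ (∑ j, 2 * a j) := by rw [Finset.prod_pow_eq_pow_sum]
      _ = (Sp ^ (1/p)) ^ (2 * k) := by rw [← Finset.mul_sum, hdeg]
      _ = Sp ^ ((2*(k:ℝ))/p) := by
          rw [← Real.rpow_natCast (Sp ^ (1/p)) (2*k), ← Real.rpow_mul hSpos.le]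
          congr 1
          push_cast
          ring
  calc (∏ j, ‖x j‖ ^ (2 * a j)) * Sp ^ (-(2*(k:ℝ))/p)
      ≤ Sp ^ ((2*(k:ℝ))/p) * Sp ^ (-(2*(k:ℝ))/p) :=
        mul_le_mul_of_nonneg_right hprod (Real.rpow_nonneg hSpos.le _)
    _ = 1 := by
        rw [← Real.rpow_add hSpos, ← add_div, add_neg_cancel, zero_div, Real.rpow_zero]

lemma lower_pointwise {n k : ℕ} (hn : 0 < n) (p : ℝ) (hp : 1 ≤ p) (δ : ℝ) (hδ0 : 0 < δ)
    (x : Fin n → ℂ) (hx : ∑ j, ‖x j‖ ^ 2 = 1)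
    (hxc : δ * (⨆ j, ‖x j‖) ≤ ⨅ j, ‖x j‖)
    (a : Fin n →₀ ℕ) (hdeg : ∑ j, a j = k) :
    δ ^ (2*k) * (n:ℝ) ^ (-(2*(k:ℝ))/p)
      ≤ (∏ j, ‖x j‖ ^ (2 * a j)) *
          (∑ j, ‖x j‖ ^ p) ^ (-(2*(k:ℝ))/p) := by
  have : Nonempty (Fin n) := Fin.pos_iff_nonempty.mp hn
  have hp0 : 0 < p := lt_of_lt_of_le one_pos hp
  set Sp := ∑ j, ‖x j‖ ^ p with hSp
  have hSpos : 0 < Sp := sum_rpow_pos p x hx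
  set Mx := ⨆ j, ‖x j‖ with hMx
  set m := ⨅ j, ‖x j‖ with hm
  have hbddA : BddAbove (Set.range fun j => ‖x j‖) :=
    (Set.finite_range _).bddAbove
  have hbddB : BddBelow (Set.range fun j => ‖x j‖) :=
    (Set.finite_range _).bddBelow
  have hMxge : ∀ j, ‖x j‖ ≤ Mx := fun j => le_ciSup hbddA j
  have hmle : ∀ j, m ≤ ‖x j‖ := fun j => ciInf_le hbddB j
  have hm0 : 0 ≤ m := le_ciInf fun j => norm_nonneg _
  have hMpos : 0 < Mx := by
    have hex : ∃ j, ‖x j‖ ≠ 0 := by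
      by_contra h
      push_neg at h
      simp [h] at hx
    obtain ⟨j, hj⟩ := hex
    exact lt_of_lt_of_le (lt_of_le_of_ne (norm_nonneg _) (Ne.symm hj)) (hMxge j)
  have hSple : Sp ≤ (n:ℝ) * Mx ^ p := by
    calc Sp ≤ ∑ _j : Fin n, Mx ^ p :=
          Finset.sum_le_sum fun j _ =>
            Real.rpow_le_rpow (norm_nonneg _) (hMxge j) hp0.le
      _ = (n:ℝ) * Mx ^ p := by simp [mul_comm]
  set e := -(2*(k:ℝ))/p with he
  have he0 : e ≤ 0 := by
    rw [he]
    exact div_nonpos_of_nonpos_of_nonneg (neg_nonpos.mpr (by positivity)) hp0.le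
  have hw : ((n:ℝ) * Mx ^ p) ^ e ≤ Sp ^ e :=
    Real.rpow_le_rpow_of_nonpos hSpos hSple he0
  have hsplit : ((n:ℝ) * Mx ^ p) ^ e = (n:ℝ) ^ e * Mx ^ (p * e) := by
    rw [Real.mul_rpow (Nat.cast_nonneg n) (Real.rpow_nonneg hMpos.le p),
      ← Real.rpow_mul hMpos.le]
  have hprod : δ ^ (2*k) * Mx ^ (2*k) ≤ ∏ j, ‖x j‖ ^ (2 * a j) := by
    calc δ ^ (2*k) * Mx ^ (2*k) = (δ * Mx) ^ (2*k) := (mul_pow _ _ _).symm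
      _ ≤ m ^ (2*k) := pow_le_pow_left₀ (by positivity) hxc _
      _ = ∏ j, m ^ (2 * a j) := by
          rw [Finset.prod_pow_eq_pow_sum, ← Finset.mul_sum, hdeg]
      _ ≤ ∏ j, ‖x j‖ ^ (2 * a j) :=
          Finset.prod_le_prod (fun j _ => pow_nonneg hm0 _)
            (fun j _ => pow_le_pow_left₀ hm0 (hmle j) _)
  have hMxcancel : Mx ^ (2*k) * Mx ^ (p * e) = 1 := by
    rw [← Real.rpow_natCast Mx (2*k), ← Real.rpow_add hMpos]
    have : ((2*k : ℕ) : ℝ) + p * e = 0 := by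
      rw [he]
      push_cast
      field_simp
      ring
    rw [this, Real.rpow_zero]
  calc δ ^ (2*k) * (n:ℝ) ^ e
      = (δ ^ (2*k) * Mx ^ (2*k)) * ((n:ℝ) ^ e * Mx ^ (p * e)) := by
        linear_combination (-(δ ^ (2*k) * (n:ℝ) ^ e)) * hMxcancel
    _ ≤ (∏ j, ‖x j‖ ^ (2 * a j)) * Sp ^ e := by
        apply mul_le_mul hprod (hsplit ▸ hw) (by positivity)
        exact Finset.prod_nonneg fun j _ => pow_nonneg (norm_nonneg _) _

/-- The two-sided comparison inequalities from the proof of the paper's Proposition 4.1: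
for a torus-invariant probability measure `μ` on the unit sphere `S ⊆ ℂ^{N+1}`, every
real `p ≥ 1`, `k ≥ 1`, `δ ∈ (0,1)` and every homogeneous `s = Σ_{|a|=k} c_a x^a`,
`δ^{2k}·(N+1)^{−2k/p}·μ(A_δ)·Σ|c_a|² ≤ ∫_S |s|²·(Σ_j |x_j|^p)^{−2k/p} dμ ≤ Σ|c_a|²`. -/
theorem phi_p_norm_comparison
    (N : ℕ) (hN : 1 ≤ N)
    (μ : Measure (Fin (N+1) → ℂ)) [IsProbabilityMeasure μ]
    (hμS : μ (cxSphere (N+1))ᶜ = 0)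
    (hμinv : ∀ u : Fin (N+1) → ℂ, (∀ j, ‖u j‖ = 1) →
      Measure.map (fun x j => u j * x j) μ = μ)
    (p : ℝ) (hp : 1 ≤ p) (k : ℕ) (hk : 1 ≤ k) (δ : ℝ) (hδ : δ ∈ Set.Ioo (0:ℝ) 1)
    (s : MvPolynomial (Fin (N+1)) ℂ) (hs : s.IsHomogeneous k) :
    δ ^ (2*k) * ((N:ℝ)+1) ^ (-(2*(k:ℝ))/p) * (μ (cornerSet (N+1) δ)).toReal *
        (∑ a ∈ s.support, ‖s.coeff a‖ ^ 2)
      ≤ (∫ x, ‖aeval x s‖ ^ 2 *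
            (∑ j, ‖x j‖ ^ p) ^ (-(2*(k:ℝ))/p) ∂μ)
    ∧ (∫ x, ‖aeval x s‖ ^ 2 *
            (∑ j, ‖x j‖ ^ p) ^ (-(2*(k:ℝ))/p) ∂μ)
      ≤ ∑ a ∈ s.support, ‖s.coeff a‖ ^ 2 := by
  classical
  set M : ℕ := k + 1 with hMdef
  have hM : 0 < M := Nat.succ_pos k
  have hp0 : 0 < p := lt_of_lt_of_le one_pos hp
  -- degree facts
  have hdeg : ∀ a ∈ s.support, ∑ j, a j = k := by
    intro a ha
    have h1 := hs (MvPolynomial.mem_support_iff.mp ha)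
    rw [← h1, Finsupp.weight_apply, Finsupp.sum]
    rw [Finset.sum_subset (Finset.subset_univ a.support)]
    · simp
    · intro j _ hj
      simp [Finsupp.notMem_support_iff.mp hj]
  have hlt : ∀ a ∈ s.support, ∀ j, a j < M := by
    intro a ha j
    have h1 : a j ≤ ∑ i, a i :=
      Finset.single_le_sum (fun i _ => Nat.zero_le _) (Finset.mem_univ j)
    rw [hdeg a ha] at h1
    omega
  -- evaluation formula
  have heval : ∀ x : Fin (N+1) → ℂ, (aeval x s : ℂ)
      = ∑ a ∈ s.support, s.coeff a * ∏ j, x j ^ (a j) := by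
    intro x
    rw [MvPolynomial.aeval_def, MvPolynomial.eval₂_eq']
    simp
  -- the weight function
  set w : (Fin (N+1) → ℂ) → ℝ :=
    fun x => (∑ j, ‖x j‖ ^ p) ^ (-(2*(k:ℝ))/p) with hwdef
  set F : (Fin (N+1) → ℂ) → ℝ :=
    fun x => ‖aeval x s‖ ^ 2 * w x with hFdef
  set G : (Fin (N+1) → ℂ) → ℝ :=
    fun x => (∑ a ∈ s.support, Complex.normSq (s.coeff a) *
      ∏ j, ‖x j‖ ^ (2 * a j)) * w x with hGdef
  have habs_meas : ∀ j : Fin (N+1), Measurable fun x : Fin (N+1) → ℂ => ‖x j‖ :=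
    fun j => continuous_norm.measurable.comp (measurable_pi_apply j)
  have hw_meas : Measurable w := by
    have h1 : Measurable fun x : Fin (N+1) → ℂ => ∑ j, ‖x j‖ ^ p :=
      Finset.measurable_sum _ fun j _ => by fun_prop (disch := exact (habs_meas j))
    fun_prop (disch := exact h1)
  have heval_meas : Measurable fun x : Fin (N+1) → ℂ => (aeval x s : ℂ) := by
    simp_rw [heval]
    exact Finset.measurable_sum _ fun a _ => measurable_const.mul <|
      Finset.measurable_prod _ fun j _ => (measurable_pi_apply j).pow_const _
  have hF_meas : Measurable F :=
    ((continuous_norm.measurable.comp heval_meas).pow_const 2).mul hw_meas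
  have hG_meas : Measurable G := by
    apply Measurable.mul _ hw_meas
    exact Finset.measurable_sum _ fun a _ => measurable_const.mul <|
      Finset.measurable_prod _ fun j _ => (habs_meas j).pow_const _
  -- a.e. membership in sphere
  have haeS : ∀ᵐ x ∂μ, x ∈ cxSphere (N+1) := by
    rw [MeasureTheory.ae_iff]
    have : {x : Fin (N+1) → ℂ | ¬ x ∈ cxSphere (N+1)} = (cxSphere (N+1))ᶜ := rfl
    rw [this]
    exact hμS
  -- nonnegativity
  have hw_nonneg : ∀ x, 0 ≤ w x := fun x => Real.rpow_nonneg
    (Finset.sum_nonneg fun j _ => Real.rpow_nonneg (norm_nonneg _) p) _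
  have hF_nonneg : ∀ x, 0 ≤ F x := fun x => mul_nonneg (by positivity) (hw_nonneg x)
  have hG_nonneg : ∀ x, 0 ≤ G x := fun x => mul_nonneg
    (Finset.sum_nonneg fun a _ => mul_nonneg (Complex.normSq_nonneg _)
      (Finset.prod_nonneg fun j _ => pow_nonneg (norm_nonneg _) _)) (hw_nonneg x)
  -- bounds on the sphere
  set B' : ℝ := ∑ a ∈ s.support, Complex.normSq (s.coeff a) with hB'
  have hB'_nonneg : 0 ≤ B' :=
    Finset.sum_nonneg fun a _ => Complex.normSq_nonneg _
  have hG_le : ∀ x ∈ cxSphere (N+1), G x ≤ B' := by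
    intro x hx
    simp only [hGdef, hB']
    rw [Finset.sum_mul]
    apply Finset.sum_le_sum
    intro a ha
    rw [mul_assoc]
    calc Complex.normSq (s.coeff a) * ((∏ j, ‖x j‖ ^ (2 * a j)) * w x)
        ≤ Complex.normSq (s.coeff a) * 1 := by
          apply mul_le_mul_of_nonneg_left _ (Complex.normSq_nonneg _)
          exact upper_pointwise p hp x hx a (hdeg a ha)
      _ = Complex.normSq (s.coeff a) := mul_one _
  have hF_le : ∀ x ∈ cxSphere (N+1), F x ≤ (∑ a ∈ s.support, ‖s.coeff a‖)^2 := by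
    intro x hx
    have hSpos : 0 < ∑ j, ‖x j‖ ^ p := sum_rpow_pos p x hx
    have habs : ‖aeval x s‖
        ≤ (∑ a ∈ s.support, ‖s.coeff a‖) *
          (∑ j, ‖x j‖ ^ p) ^ ((k:ℝ)/p) := by
      rw [heval]
      refine le_trans (norm_sum_le _ _) ?_
      rw [Finset.sum_mul]
      apply Finset.sum_le_sum
      intro a ha
      rw [norm_mul]
      apply mul_le_mul_of_nonneg_left _ (norm_nonneg _)
      rw [norm_prod]
      calc ∏ j, ‖x j ^ (a j)‖
          = ∏ j, ‖x j‖ ^ (a j) := by simp [norm_pow]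
        _ ≤ ∏ j, ((∑ i, ‖x i‖ ^ p) ^ (1/p)) ^ (a j) :=
            Finset.prod_le_prod (fun j _ => pow_nonneg (norm_nonneg _) _)
              (fun j _ => pow_le_pow_left₀ (norm_nonneg _)
                (abs_le_sum_rpow p hp x hx j) _)
        _ = ((∑ i, ‖x i‖ ^ p) ^ (1/p)) ^ (∑ j, a j) := by
            rw [Finset.prod_pow_eq_pow_sum]
        _ = (∑ j, ‖x j‖ ^ p) ^ ((k:ℝ)/p) := by
            rw [hdeg a ha, ← Real.rpow_natCast ((∑ i, ‖x i‖ ^ p) ^ (1/p)) k,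
              ← Real.rpow_mul hSpos.le, one_div, inv_mul_eq_div]
    have h2 : ‖aeval x s‖ ^ 2
        ≤ (∑ a ∈ s.support, ‖s.coeff a‖)^2 *
          (∑ j, ‖x j‖ ^ p) ^ ((2*(k:ℝ))/p) := by
      have := pow_le_pow_left₀ (norm_nonneg _) habs 2
      rw [mul_pow] at this
      refine le_trans this ?_
      apply mul_le_mul_of_nonneg_left _ (by positivity)
      rw [← Real.rpow_natCast ((∑ j, ‖x j‖ ^ p) ^ ((k:ℝ)/p)) 2,
        ← Real.rpow_mul hSpos.le]
      apply le_of_eq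
      congr 1
      push_cast
      ring
    calc F x ≤ ((∑ a ∈ s.support, ‖s.coeff a‖)^2 *
          (∑ j, ‖x j‖ ^ p) ^ ((2*(k:ℝ))/p)) * w x :=
          mul_le_mul_of_nonneg_right h2 (hw_nonneg x)
      _ = (∑ a ∈ s.support, ‖s.coeff a‖)^2 *
          ((∑ j, ‖x j‖ ^ p) ^ ((2*(k:ℝ))/p) * w x) := by ring
      _ ≤ (∑ a ∈ s.support, ‖s.coeff a‖)^2 * 1 := by
          apply mul_le_mul_of_nonneg_left _ (by positivity)
          rw [hwdef, ← Real.rpow_add hSpos, ← add_div, add_neg_cancel, zero_div,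
            Real.rpow_zero]
      _ = (∑ a ∈ s.support, ‖s.coeff a‖)^2 := mul_one _
  -- integrability
  have hF_int : Integrable F μ := by
    apply Integrable.mono' (integrable_const ((∑ a ∈ s.support, ‖s.coeff a‖)^2))
      hF_meas.aestronglyMeasurable
    filter_upwards [haeS] with x hx
    rw [Real.norm_of_nonneg (hF_nonneg x)]
    exact hF_le x hx
  have hG_int : Integrable G μ := by
    apply Integrable.mono' (integrable_const B') hG_meas.aestronglyMeasurable
    filter_upwards [haeS] with x hx
    rw [Real.norm_of_nonneg (hG_nonneg x)]
    exact hG_le x hx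
  -- torus elements
  set u : (Fin (N+1) → Fin M) → Fin (N+1) → ℂ :=
    fun t j => Complex.exp (2 * Real.pi * Complex.I * ((t j : ℕ) : ℂ) / M) with hudef
  have hu_abs : ∀ t j, ‖u t j‖ = 1 := by
    intro t j
    have harg : (2 * (Real.pi:ℂ) * Complex.I * ((t j : ℕ) : ℂ) / M)
        = ((2 * Real.pi * ((t j : ℕ):ℝ) / M : ℝ) : ℂ) * Complex.I := by
      push_cast
      ring
    rw [hudef]
    simp only
    rw [harg, Complex.norm_exp_ofReal_mul_I]
  set T : (Fin (N+1) → Fin M) → (Fin (N+1) → ℂ) → (Fin (N+1) → ℂ) :=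
    fun t x j => u t j * x j with hTdef
  have hT_meas : ∀ t, Measurable (T t) := by
    intro t
    exact measurable_pi_lambda _ fun j => (measurable_pi_apply j).const_mul _
  have hmap : ∀ t, Measure.map (T t) μ = μ := fun t => hμinv (u t) (hu_abs t)
  -- pointwise averaging identity
  have hptw : ∀ x : Fin (N+1) → ℂ, ∑ t : Fin (N+1) → Fin M, F (T t x) = (M:ℝ)^(N+1) * G x := by
    intro x
    have hwT : ∀ t, w (T t x) = w x := by
      intro t
      simp only [hwdef]
      congr 1
      refine Finset.sum_congr rfl fun j _ => ?_
      simp only [hTdef]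
      rw [norm_mul, hu_abs t j, one_mul]
    have hFT : ∀ t, F (T t x) = Complex.normSq (∑ a ∈ s.support, s.coeff a *
        ∏ j, (u t j * x j) ^ (a j)) * w x := by
      intro t
      simp only [hFdef]
      rw [hwT t, Complex.sq_norm, heval]
    simp_rw [hFT]
    rw [← Finset.sum_mul]
    rw [avg_identity (N+1) M hM x s.support s.coeff hlt]
    rw [hGdef]
    have : ∀ a : Fin (N+1) →₀ ℕ, (∏ j, Complex.normSq (x j) ^ (a j))
        = ∏ j, ‖x j‖ ^ (2 * a j) := by
      intro a
      refine Finset.prod_congr rfl fun j _ => ?_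
      rw [← Complex.sq_norm, ← pow_mul]
    simp_rw [this]
    ring
  -- equality of integrals
  have hFG : ∫ x, F x ∂μ = ∫ x, G x ∂μ := by
    have hFT_int : ∀ t : Fin (N+1) → Fin M, Integrable (fun x => F (T t x)) μ := by
      intro t
      have h0 := integrable_map_measure (μ := μ) (f := T t) (g := F)
        (by rw [hmap t]; exact hF_meas.aestronglyMeasurable) (hT_meas t).aemeasurable
      rw [hmap t] at h0
      exact h0.mp hF_int
    have hTF_eq : ∀ t : Fin (N+1) → Fin M, ∫ x, F (T t x) ∂μ = ∫ x, F x ∂μ := by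
      intro t
      have h1 := MeasureTheory.integral_map (hT_meas t).aemeasurable
        (f := F) (by rw [hmap t]; exact hF_meas.aestronglyMeasurable)
      rw [hmap t] at h1
      exact h1.symm
    have h2 : ((M:ℝ)^(N+1)) * ∫ x, F x ∂μ = ((M:ℝ)^(N+1)) * ∫ x, G x ∂μ := by
      calc ((M:ℝ)^(N+1)) * ∫ x, F x ∂μ
          = ∑ _t : Fin (N+1) → Fin M, ∫ x, F x ∂μ := by
            rw [Finset.sum_const, Finset.card_univ, Fintype.card_pi]
            simp [nsmul_eq_mul]
        _ = ∑ t : Fin (N+1) → Fin M, ∫ x, F (T t x) ∂μ := by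
            exact Finset.sum_congr rfl fun t _ => (hTF_eq t).symm
        _ = ∫ x, ∑ t : Fin (N+1) → Fin M, F (T t x) ∂μ :=
            (MeasureTheory.integral_finset_sum _ fun t _ => hFT_int t).symm
        _ = ∫ x, ((M:ℝ)^(N+1)) * G x ∂μ := by
            refine integral_congr_ae (Filter.Eventually.of_forall fun x => ?_)
            exact hptw x
        _ = ((M:ℝ)^(N+1)) * ∫ x, G x ∂μ := by rw [integral_const_mul]
    have hMn : ((M:ℝ)^(N+1)) ≠ 0 := by positivity
    exact mul_left_cancel₀ hMn h2
  -- rewrite target in terms of F and B'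
  have hsum_eq : (∑ a ∈ s.support, ‖s.coeff a‖ ^ 2) = B' := by
    rw [hB']
    exact Finset.sum_congr rfl fun a _ => Complex.sq_norm _
  have hint_eq : (∫ x, ‖aeval x s‖ ^ 2 *
      (∑ j, ‖x j‖ ^ p) ^ (-(2*(k:ℝ))/p) ∂μ) = ∫ x, F x ∂μ := rfl
  constructor
  · -- lower bound
    rw [hint_eq, hFG, hsum_eq]
    set c₀ : ℝ := δ ^ (2*k) * ((N:ℝ)+1) ^ (-(2*(k:ℝ))/p) with hc₀
    have hc₀_nonneg : 0 ≤ c₀ := by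
      rw [hc₀]
      apply mul_nonneg (pow_nonneg hδ.1.le _) (Real.rpow_nonneg (by positivity) _)
    have hA_meas : MeasurableSet (cornerSet (N+1) δ) := by
      have h1 : MeasurableSet (cxSphere (N+1)) := by
        have : cxSphere (N+1) = (fun x : Fin (N+1) → ℂ => ∑ j, ‖x j‖ ^ 2) ⁻¹' {1} := rfl
        rw [this]
        exact (Finset.measurable_sum _ fun j _ => (habs_meas j).pow_const 2)
          (measurableSet_singleton 1)
      have h2 : MeasurableSet {x : Fin (N+1) → ℂ |
          δ * (⨆ j, ‖x j‖) ≤ ⨅ j, ‖x j‖} := by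
        apply measurableSet_le
        · exact (Measurable.iSup fun j => habs_meas j).const_mul δ
        · exact Measurable.iInf fun j => habs_meas j
      have : cornerSet (N+1) δ = cxSphere (N+1) ∩ {x : Fin (N+1) → ℂ |
          δ * (⨆ j, ‖x j‖) ≤ ⨅ j, ‖x j‖} := rfl
      rw [this]
      exact h1.inter h2
    have hlow : ∀ x ∈ cornerSet (N+1) δ, c₀ * B' ≤ G x := by
      intro x hx
      obtain ⟨hxS, hxc⟩ := hx
      simp only [hGdef, hc₀]
      rw [Finset.sum_mul, Finset.mul_sum]
      apply Finset.sum_le_sum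
      intro a ha
      have hlp := lower_pointwise (Nat.succ_pos N) p hp δ hδ.1 x hxS hxc a (hdeg a ha)
      have hcast : (((N+1):ℕ):ℝ) = (N:ℝ)+1 := by push_cast; ring
      rw [hcast] at hlp
      calc δ ^ (2*k) * ((N:ℝ)+1) ^ (-(2*(k:ℝ))/p) * Complex.normSq (s.coeff a)
          = Complex.normSq (s.coeff a) * (δ ^ (2*k) * ((N:ℝ)+1) ^ (-(2*(k:ℝ))/p)) := by ring
        _ ≤ Complex.normSq (s.coeff a) *
            ((∏ j, ‖x j‖ ^ (2 * a j)) *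
              (∑ j, ‖x j‖ ^ p) ^ (-(2*(k:ℝ))/p)) :=
            mul_le_mul_of_nonneg_left hlp (Complex.normSq_nonneg _)
        _ = Complex.normSq (s.coeff a) * (∏ j, ‖x j‖ ^ (2 * a j)) *
            (∑ j, ‖x j‖ ^ p) ^ (-(2*(k:ℝ))/p) := by ring
    calc δ ^ (2*k) * ((N:ℝ)+1) ^ (-(2*(k:ℝ))/p) * (μ (cornerSet (N+1) δ)).toReal * B'
        = ∫ _x in cornerSet (N+1) δ, c₀ * B' ∂μ := by
          rw [MeasureTheory.setIntegral_const]
          rw [smul_eq_mul, Measure.real]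
          ring
      _ ≤ ∫ x in cornerSet (N+1) δ, G x ∂μ := by
          apply MeasureTheory.setIntegral_mono_on
            (integrable_const _).integrableOn hG_int.integrableOn hA_meas
          exact hlow
      _ ≤ ∫ x, G x ∂μ :=
          MeasureTheory.setIntegral_le_integral hG_int
            (Filter.Eventually.of_forall fun x => hG_nonneg x)
  · -- upper bound
    rw [hint_eq, hFG, hsum_eq]
    calc ∫ x, G x ∂μ ≤ ∫ _x, B' ∂μ := by
          apply integral_mono_ae hG_int (integrable_const _)
          filter_upwards [haeS] with x hx
          exact hG_le x hx
      _ = B' := by simp [measure_univ]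
end
end
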